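/- arXiv:2109.00626 — 5 statements merged into one kernel-verified Lean document; each statement's English description precedes it below -/
import Mathlib

section
/- Let I₁, I₂, I₃, I₄, J₁, J₃, R₁, R₂, R₃, P₁, P₂ be positive natural numbers. Suppose the order-4 tensor X : Fin I₁ → Fin I₂ → Fin I₃ → Fin I₄ → ℝ satisfies X i₁ i₂ i₃ i₄ = Σ_{r₁,r₂,r₃} A_x i₃ r₁ * G₂ r₁ i₁ r₂ * G₃ r₂ i₂ r₃ * B_x r₃ i₄ (a TT decomposition of the permuted tensor X^ρ ∈ ℝ^{I₃×I₁×I₂×I₄} with cores A_x : Fin I₃ → Fin R₁ → ℝ, G₂ : Fin R₁ → Fin I₁ → Fin R₂ → ℝ, G₃ : Fin R₂ → Fin I₂ → Fin R₃ → ℝ, B_x : Fin R₃ → Fin I₄ → ℝ), and the order-3 tensor Y : Fin J₁ → Fin I₃ → Fin J₃ → ℝ satisfies Y j₁ k j₃ = Σ_{p₁,p₂} A_y k p₁ * H₂ p₁ j₁ p₂ * B_y p₂ j₃ (a TT decomposition of the permuted tensor Y^ρ ∈ ℝ^{J₂×J₁×J₃} with J₂ = I₃ and cores A_y : Fin I₃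 → Fin P₁ → ℝ, H₂ : Fin P₁ → Fin J₁ → Fin P₂ → ℝ, B_y : Fin P₂ → Fin J₃ → ℝ). Then the (3,2)-contraction Z = X ×₃² Y, defined by Z i₁ i₂ i₄ j₁ j₃ = Σ_{k : Fin I₃} X i₁ i₂ k i₄ * Y j₁ k j₃, satisfies Z i₁ i₂ i₄ j₁ j₃ = Σ_{r₁,r₂,r₃,p₁,p₂} K r₁ p₁ * G₂ r₁ i₁ r₂ * G₃ r₂ i₂ r₃ * B_x r₃ i₄ * H₂ p₁ j₁ p₂ * B_y p₂ j₃, where K : Fin R₁ → Fin P₁ → ℝ is the matrix product K = A_xᵀ · A_y, i.e. K r p = Σ_{k : Fin I₃} A_x k r * A_y k p. -/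
/-- **Example 1 (TTCP for an order-4 and an order-3 tensor).** If `X` admits a TT
decomposition of its permutation `X^ρ ∈ ℝ^{I₃×I₁×I₂×I₄}` with leading matrix core `A_x`,
and `Y` admits a TT decomposition of its permutation `Y^ρ ∈ ℝ^{J₂×J₁×J₃}` (`J₂ = I₃`)
with leading matrix core `A_y`, then the (3,2)-contraction `Z = X ×₃² Y` is realised by
the single matrix product `K = A_xᵀ · A_y` merging the two tensor trains. -/
theorem ttcp_order4_order3
    (I₁ I₂ I₃ I₄ J₁ J₃ R₁ R₂ R₃ P₁ P₂ : ℕ)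
    (hI₁ : 0 < I₁) (hI₂ : 0 < I₂) (hI₃ : 0 < I₃) (hI₄ : 0 < I₄)
    (hJ₁ : 0 < J₁) (hJ₃ : 0 < J₃)
    (hR₁ : 0 < R₁) (hR₂ : 0 < R₂) (hR₃ : 0 < R₃) (hP₁ : 0 < P₁) (hP₂ : 0 < P₂)
    (Ax : Fin I₃ → Fin R₁ → ℝ)
    (G₂ : Fin R₁ → Fin I₁ → Fin R₂ → ℝ)
    (G₃ : Fin R₂ → Fin I₂ → Fin R₃ → ℝ)
    (Bx : Fin R₃ → Fin I₄ → ℝ)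
    (Ay : Fin I₃ → Fin P₁ → ℝ)
    (H₂ : Fin P₁ → Fin J₁ → Fin P₂ → ℝ)
    (By : Fin P₂ → Fin J₃ → ℝ)
    (X : Fin I₁ → Fin I₂ → Fin I₃ → Fin I₄ → ℝ)
    (Y : Fin J₁ → Fin I₃ → Fin J₃ → ℝ)
    (hX : ∀ i₁ i₂ i₃ i₄, X i₁ i₂ i₃ i₄ =
      ∑ r₁ : Fin R₁, ∑ r₂ : Fin R₂, ∑ r₃ : Fin R₃,
        Ax i₃ r₁ * G₂ r₁ i₁ r₂ * G₃ r₂ i₂ r₃ * Bx r₃ i₄)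
    (hY : ∀ j₁ k j₃, Y j₁ k j₃ =
      ∑ p₁ : Fin P₁, ∑ p₂ : Fin P₂,
        Ay k p₁ * H₂ p₁ j₁ p₂ * By p₂ j₃)
    (Z : Fin I₁ → Fin I₂ → Fin I₄ → Fin J₁ → Fin J₃ → ℝ)
    (hZ : ∀ i₁ i₂ i₄ j₁ j₃, Z i₁ i₂ i₄ j₁ j₃ =
      ∑ k : Fin I₃, X i₁ i₂ k i₄ * Y j₁ k j₃)
    (K : Fin R₁ → Fin P₁ → ℝ)
    (hK : ∀ r p, K r p = ∑ k : Fin I₃, Ax k r * Ay k p) :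
    ∀ i₁ i₂ i₄ j₁ j₃, Z i₁ i₂ i₄ j₁ j₃ =
      ∑ r₁ : Fin R₁, ∑ r₂ : Fin R₂, ∑ r₃ : Fin R₃, ∑ p₁ : Fin P₁, ∑ p₂ : Fin P₂,
        K r₁ p₁ * G₂ r₁ i₁ r₂ * G₃ r₂ i₂ r₃ * Bx r₃ i₄ * H₂ p₁ j₁ p₂ * By p₂ j₃ := by
  intro i₁ i₂ i₄ j₁ j₃
  simp only [hZ, hX, hY, hK, Finset.sum_mul, Finset.mul_sum]
  simp only [Finset.sum_comm (γ := Fin I₃) (α := Fin R₁),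
    Finset.sum_comm (γ := Fin I₃) (α := Fin R₂),
    Finset.sum_comm (γ := Fin I₃) (α := Fin R₃),
    Finset.sum_comm (γ := Fin I₃) (α := Fin P₁),
    Finset.sum_comm (γ := Fin I₃) (α := Fin P₂),
    Finset.sum_comm (γ := Fin P₁) (α := Fin R₁),
    Finset.sum_comm (γ := Fin P₁) (α := Fin R₂),
    Finset.sum_comm (γ := Fin P₁) (α := Fin R₃),
    Finset.sum_comm (γ := Fin P₂) (α := Fin R₁),
    Finset.sum_comm (γ := Fin P₂) (α := Fin R₂),
    Finset.sum_comm (γ := Fin P₂) (α := Fin R₃)]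
  refine Finset.sum_congr rfl fun r₁ _ => Finset.sum_congr rfl fun r₂ _ =>
    Finset.sum_congr rfl fun r₃ _ => Finset.sum_congr rfl fun p₁ _ =>
    Finset.sum_congr rfl fun p₂ _ => Finset.sum_congr rfl fun k _ => by ring
end

section
/- Let C be a positive natural number, N, M ≥ 1, and let I : Fin N → ℕ and J : Fin M → ℕ be families of positive dimensions. Let Rx : Fin (N+1) → ℕ with Rx N = 1, and cores A_x : Fin C → Fin (Rx 0) → ℝ and Gx : ∀ k : Fin N, Fin (Rx k.castSucc) → Fin (I k) → Fin (Rx k.succ) → ℝ; similarly let Py : Fin (M+1) → ℕ with Py M = 1, and cores A_y : Fin C → Fin (Py 0) → ℝ and Gy : ∀ k : Fin M, Fin (Py k.castSucc) → Fin (J k) → Fin (Py k.succ) → ℝ. Define the tensors X : Fin C → (∀ k : Fin N, Fin (I k)) → ℝ by X c i = Σ_{r : ∀ j : Fin (N+1), Fin (Rx j)} A_x c (r 0) * ∏_{k : Fin N} Gx k (r k.castSucc) (i k) (r k.succ), and Y : Fin C → (∀ k : Fin M, Fin (J k)) → ℝ by Y c j = Σ_{p : ∀ l : Fin (M+1), Fin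 (Py l)} A_y c (p 0) * ∏_{k : Fin M} Gy k (p k.castSucc) (j k) (p k.succ). Then for all i and j, Σ_{c : Fin C} X c i * Y c j = Σ_{r} Σ_{p} K (r 0) (p 0) * ∏_{k : Fin N} Gx k (r k.castSucc) (i k) (r k.succ) * ∏_{k : Fin M} Gy k (p k.castSucc) (j k) (p k.succ), where K u v = Σ_{c : Fin C} A_x c u * A_y c v (i.e. K = A_xᵀ · A_y). In particular, the contraction of X and Y along their first mode is itself given in tensor-train form, as the merged train of the cores of X (reversed), the matrix K, and the cores of Y. -/
/-- **Correctness of the Tensor-Train Contraction Product (Algorithm 2).**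
If `X` and `Y` are given in TT format with their common (first) mode of dimension `C`
leading, carried by the matrix cores `A_x` and `A_y`, then the contraction of `X` and `Y`
along that mode is again a tensor train, obtained from the single matrix multiplication
`K = A_xᵀ · A_y` merging the two trains. -/
theorem ttcp_general
    (C N M : ℕ) (hC : 0 < C) (hN : 1 ≤ N) (hM : 1 ≤ M)
    (I : Fin N → ℕ) (J : Fin M → ℕ)
    (hI : ∀ k, 0 < I k) (hJ : ∀ k, 0 < J k)
    (Rx : Fin (N + 1) → ℕ) (hRx : Rx (Fin.last N) = 1)
    (Ax : Fin C → Fin (Rx 0) → ℝ)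
    (Gx : ∀ k : Fin N, Fin (Rx k.castSucc) → Fin (I k) → Fin (Rx k.succ) → ℝ)
    (Py : Fin (M + 1) → ℕ) (hPy : Py (Fin.last M) = 1)
    (Ay : Fin C → Fin (Py 0) → ℝ)
    (Gy : ∀ k : Fin M, Fin (Py k.castSucc) → Fin (J k) → Fin (Py k.succ) → ℝ)
    (X : Fin C → (∀ k : Fin N, Fin (I k)) → ℝ)
    (Y : Fin C → (∀ k : Fin M, Fin (J k)) → ℝ)
    (hX : ∀ c i, X c i =
      ∑ r : ∀ j : Fin (N + 1), Fin (Rx j),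
        Ax c (r 0) * ∏ k : Fin N, Gx k (r k.castSucc) (i k) (r k.succ))
    (hY : ∀ c j, Y c j =
      ∑ p : ∀ l : Fin (M + 1), Fin (Py l),
        Ay c (p 0) * ∏ k : Fin M, Gy k (p k.castSucc) (j k) (p k.succ))
    (K : Fin (Rx 0) → Fin (Py 0) → ℝ)
    (hK : ∀ u v, K u v = ∑ c : Fin C, Ax c u * Ay c v) :
    ∀ (i : ∀ k : Fin N, Fin (I k)) (j : ∀ k : Fin M, Fin (J k)),
      ∑ c : Fin C, X c i * Y c j =
        ∑ r : ∀ j' : Fin (N + 1), Fin (Rx j'),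
          ∑ p : ∀ l : Fin (M + 1), Fin (Py l),
            K (r 0) (p 0) *
              (∏ k : Fin N, Gx k (r k.castSucc) (i k) (r k.succ)) *
              (∏ k : Fin M, Gy k (p k.castSucc) (j k) (p k.succ)) := by
  intro i j
  simp only [hX, hY, hK, Finset.sum_mul_sum, Finset.sum_mul, Finset.mul_sum]
  rw [Finset.sum_comm]
  conv_lhs => enter [2, p]; rw [Finset.sum_comm]
  rw [Finset.sum_comm]
  exact Finset.sum_congr rfl fun r _ => Finset.sum_congr rfl fun p _ =>
    Finset.sum_congr rfl fun c _ => by ring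
end

section
/- Let N ≥ 1 and let I : Fin N → ℕ be a family of positive dimensions, and let X : (∀ k : Fin N, Fin (I k)) → ℝ be an order-N real tensor. Then there exist ranks R : Fin (N+1) → ℕ with R 0 = 1 and R N = 1, and cores G : ∀ k : Fin N, Fin (R k.castSucc) → Fin (I k) → Fin (R k.succ) → ℝ, such that X i = Σ_{r : ∀ j : Fin (N+1), Fin (R j)} ∏_{k : Fin N} G k (r k.castSucc) (i k) (r k.succ) holds exactly for all i, and moreover for each n with 1 ≤ n ≤ N−1 the rank R n equals the matrix rank of the n-th unfolding X⟨n⟩ of X; in particular R n ≤ min(∏_{k < n} I k, ∏_{k ≥ n} I k). -/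
/-!
Let `A n` be a basis of the column space of the unfolding `X⟨n⟩`, viewed as functions of the
first `n` indices, with `A 0 = 1` and `A N = X`. Once the `n`-th index `j` is fixed, every column
of `X⟨n+1⟩` becomes a column of `X⟨n⟩`, so `A (n+1) (·, j) = A n · G n j` for some matrix
`G n j`. Unrolling this recursion expresses `X = A N` as the product of the `G n (i n)`, which is
a tensor train whose ranks are the ranks of the unfoldings.
-/

noncomputable section

/-- The entry at multi-index `i` of the tensor train with ranks `R` and cores `G`. -/
def ttEntry {N : ℕ} (I : Fin N → ℕ) (R : Fin (N + 1) → ℕ)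
    (G : ∀ k : Fin N, Fin (R k.castSucc) → Fin (I k) → Fin (R k.succ) → ℝ)
    (i : ∀ k : Fin N, Fin (I k)) : ℝ :=
  ∑ r : ∀ j : Fin (N + 1), Fin (R j),
    ∏ k : Fin N, G k (r k.castSucc) (i k) (r k.succ)

/-- The `n`-th unfolding of an order-`N` tensor `X`: the matrix whose rows are indexed by
the index tuples `(i k)_{k < n}`, whose columns are indexed by the tuples `(i k)_{k ≥ n}`,
and whose entries are the corresponding entries of `X`. -/
def unfold {N : ℕ} (I : Fin N → ℕ) (X : (∀ k : Fin N, Fin (I k)) → ℝ) (n : ℕ) :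
    Matrix (∀ k : {k : Fin N // (k : ℕ) < n}, Fin (I k.1))
           (∀ k : {k : Fin N // n ≤ (k : ℕ)}, Fin (I k.1)) ℝ :=
  fun row col =>
    X (fun k => if h : (k : ℕ) < n then row ⟨k, h⟩ else col ⟨k, not_lt.mp h⟩)

open Matrix Submodule Set

theorem sum_prod_transfer_eq_dotProduct (R : ℕ → ℕ) :
    ∀ (n : ℕ) (M : ∀ k < n, Matrix (Fin (R k)) (Fin (R (k + 1))) ℝ) (u : ∀ k, Fin (R k) → ℝ),
      (∀ k (hk : k < n), u (k + 1) = u k ᵥ* M k hk) → ∀ w : Fin (R n) → ℝ,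
      ∑ r : ∀ j : Fin (n + 1), Fin (R j),
        u 0 (r 0) * (∏ k : Fin n, M k k.isLt (r k.castSucc) (r k.succ)) * w (r (Fin.last n))
        = u n ⬝ᵥ w
  | 0, M, u, _, w => by
    rw [← (Fin.consEquiv fun j : Fin 1 => Fin (R j)).sum_comp, Fintype.sum_prod_type]
    simp [dotProduct]
  | n + 1, M, u, hu, w => by
    rw [← (Fin.snocEquiv fun j : Fin (n + 2) => Fin (R j)).sum_comp, Fintype.sum_prod_type,
      Finset.sum_comm, hu n n.lt_succ_self, ← dotProduct_mulVec,
      ← sum_prod_transfer_eq_dotProduct R n (fun k hk => M k (hk.trans n.lt_succ_self)) u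
        (fun k hk => hu k (hk.trans n.lt_succ_self))]
    refine Finset.sum_congr rfl fun p _ => ?_
    simp only [Fin.snocEquiv_apply, Fin.prod_univ_castSucc, mulVec, dotProduct, Finset.mul_sum]
    refine Finset.sum_congr rfl fun b _ => ?_
    -- `0`, `k.castSucc.succ` and `(Fin.last n).succ` are definitionally
    -- `Fin.castSucc 0`, `k.succ.castSucc` and `Fin.last (n + 1)`
    have h0 : (Fin.snoc p b : ∀ j : Fin (n + 2), Fin (R j)) 0 = p 0 :=
      Fin.snoc_castSucc (i := 0) ..
    have hsucc (k : Fin n) :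
        (Fin.snoc p b : ∀ j : Fin (n + 2), Fin (R j)) k.castSucc.succ = p k.succ :=
      Fin.snoc_castSucc (i := k.succ) ..
    have hlast : (Fin.snoc p b : ∀ j : Fin (n + 2), Fin (R j)) (Fin.last n).succ = b :=
      Fin.snoc_last ..
    simp only [h0, hsucc, hlast, Fin.snoc_castSucc, Fin.snoc_last, Fin.val_castSucc,
      Fin.val_last]
    ring

theorem Matrix.exists_fin_rank_spanning_cols {m n K : Type*} [Fintype n] [Field K]
    (A : Matrix m n K) :
    ∃ v : Fin A.rank → m → K, (∀ b, v b ∈ span K (range A.col)) ∧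
      span K (range v) = span K (range A.col) := by
  have := Module.Finite.span_of_finite K (finite_range A.col)
  let b := Module.finBasisOfFinrankEq K _ (rank_eq_finrank_span_cols A).symm
  refine ⟨Subtype.val ∘ b, fun i => (b i).2, ?_⟩
  rw [range_comp, ← coe_subtype, ← map_span, b.span_eq, map_subtype_top]

namespace TensorTrain

variable {N : ℕ} {I : Fin N → ℕ}

variable (I) in
abbrev LeftIdx (n : ℕ) := ∀ k : {k : Fin N // (k : ℕ) < n}, Fin (I k.1)

variable (I) in
abbrev RightIdx (n : ℕ) := ∀ k : {k : Fin N // n ≤ (k : ℕ)}, Fin (I k.1)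

def leftPart (n : ℕ) (i : ∀ k, Fin (I k)) : LeftIdx I n := fun k => i k.1

def glue {n : ℕ} (hn : n < N) (r : LeftIdx I n) (j : Fin (I ⟨n, hn⟩)) : LeftIdx I (n + 1) :=
  fun k => if h : (k.1 : ℕ) < n then r ⟨k.1, h⟩
    else Fin.cast (congrArg I (Fin.ext (by have := k.2; simp only; omega))) j

def extend {n : ℕ} (hn : n < N) (c : RightIdx I (n + 1)) (j : Fin (I ⟨n, hn⟩)) :
    RightIdx I n :=
  fun k => if h : n + 1 ≤ (k.1 : ℕ) then c ⟨k.1, h⟩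
    else Fin.cast (congrArg I (Fin.ext (by have := k.2; simp only; omega))) j

theorem glue_leftPart {n : ℕ} (hn : n < N) (i : ∀ k, Fin (I k)) :
    glue hn (leftPart n i) (i ⟨n, hn⟩) = leftPart (n + 1) i := by
  funext ⟨k, hk⟩
  by_cases h : (k : ℕ) < n
  · simp [glue, leftPart, h]
  · obtain rfl : k = ⟨n, hn⟩ := Fin.ext (by simp only; omega)
    simp [glue, leftPart]

theorem unfold_succ_glue (X : (∀ k, Fin (I k)) → ℝ) {n : ℕ} (hn : n < N) (r : LeftIdx I n)
    (j : Fin (I ⟨n, hn⟩)) (c : RightIdx I (n + 1)) :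
    unfold I X (n + 1) (glue hn r j) c = unfold I X n r (extend hn c j) := by
  simp only [unfold]
  congr 1
  funext q
  rcases Nat.lt_trichotomy (q : ℕ) n with hq | hq | hq
  · simp [glue, hq, Nat.lt_succ_of_lt hq]
  · simp [glue, extend, hq]
  · simp [extend, hq.not_gt, hq.not_ge, Nat.succ_le_of_lt hq]

theorem mem_span_one_zero (f : LeftIdx I 0 → ℝ) :
    f ∈ span ℝ (range fun (_ : Fin 1) (_ : LeftIdx I 0) => (1 : ℝ)) := by
  have : IsEmpty {k : Fin N // (k : ℕ) < 0} := ⟨fun k => Nat.not_lt_zero _ k.2⟩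
  refine (mem_span_range_iff_exists_fun ℝ).2 ⟨fun _ => f default, funext fun r => ?_⟩
  simp [Subsingleton.elim r default]

theorem unfold_col_of_le (X : (∀ k, Fin (I k)) → ℝ) {n : ℕ} (hn : N ≤ n) (c : RightIdx I n) :
    (unfold I X n).col c = fun r => X fun k => r ⟨k, k.isLt.trans_le hn⟩ := by
  funext r
  simp only [col, transpose_apply, unfold]
  congr 1
  funext k
  rw [dif_pos (k.isLt.trans_le hn)]

theorem exists_frame (hN : 1 ≤ N) (X : (∀ k, Fin (I k)) → ℝ) (n : ℕ) :
    ∃ (r : ℕ) (A : Fin r → LeftIdx I n → ℝ),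
      (n = 0 → r = 1 ∧ ∀ b row, A b row = 1) ∧
      (0 < n → n < N → r = (unfold I X n).rank) ∧
      (n = N → r = 1 ∧ ∀ b i, A b (leftPart n i) = X i) ∧
      (0 < n → ∀ b, A b ∈ span ℝ (range (unfold I X n).col)) ∧
      span ℝ (range (unfold I X n).col) ≤ span ℝ (range A) := by
  rcases Nat.eq_zero_or_pos n with rfl | hpos
  · refine ⟨1, fun _ _ => 1, fun _ => ⟨rfl, fun _ _ => rfl⟩, (absurd · (lt_irrefl 0)),
      fun h => by omega, (absurd · (lt_irrefl 0)), span_le.2 ?_⟩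
    rintro _ ⟨c, rfl⟩
    exact mem_span_one_zero _
  by_cases hlt : n < N
  · obtain ⟨A, hmem, hspan⟩ := (unfold I X n).exists_fin_rank_spanning_cols
    exact ⟨_, A, by omega, fun _ _ => rfl, by omega, fun _ => hmem, hspan.ge⟩
  have hle : N ≤ n := not_lt.1 hlt
  let c₀ : RightIdx I n := fun k => absurd k.2 (not_le.2 (k.1.isLt.trans_le hle))
  refine ⟨1, fun _ r => X fun k => r ⟨k, k.isLt.trans_le hle⟩, by omega, fun _ h => absurd h hlt,
    fun _ => ⟨rfl, fun _ _ => rfl⟩, fun _ _ => subset_span ⟨c₀, unfold_col_of_le X hle c₀⟩,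
    span_le.2 ?_⟩
  rintro _ ⟨c, rfl⟩
  exact subset_span ⟨0, (unfold_col_of_le X hle c).symm⟩

theorem comp_glue_mem_span_col (X : (∀ k, Fin (I k)) → ℝ) {n : ℕ} (hn : n < N)
    (j : Fin (I ⟨n, hn⟩)) {F : LeftIdx I (n + 1) → ℝ}
    (hF : F ∈ span ℝ (range (unfold I X (n + 1)).col)) :
    (fun r => F (glue hn r j)) ∈ span ℝ (range (unfold I X n).col) := by
  have : span ℝ (range (unfold I X (n + 1)).col) ≤
      (span ℝ (range (unfold I X n).col)).comap (LinearMap.funLeft ℝ ℝ (glue hn · j)) :=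
    span_le.2 <| by
      rintro _ ⟨c, rfl⟩
      exact subset_span ⟨extend hn c j, funext fun r => (unfold_succ_glue X hn r j c).symm⟩
  exact this hF

theorem exists_transfer (X : (∀ k, Fin (I k)) → ℝ) {n : ℕ} (hn : n < N) {r r' : ℕ}
    (A : Fin r → LeftIdx I n → ℝ) (A' : Fin r' → LeftIdx I (n + 1) → ℝ)
    (hA : span ℝ (range (unfold I X n).col) ≤ span ℝ (range A))
    (hA' : ∀ b, A' b ∈ span ℝ (range (unfold I X (n + 1)).col)) :
    ∃ g : Fin (I ⟨n, hn⟩) → Matrix (Fin r) (Fin r') ℝ, ∀ i : ∀ k, Fin (I k),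
      (fun b => A' b (leftPart (n + 1) i)) = (fun a => A a (leftPart n i)) ᵥ* g (i ⟨n, hn⟩) := by
  have hcoeff (j : Fin (I ⟨n, hn⟩)) (b : Fin r') :
      ∃ c : Fin r → ℝ, ∀ row, A' b (glue hn row j) = ∑ a, c a * A a row := by
    obtain ⟨c, hc⟩ :=
      (mem_span_range_iff_exists_fun ℝ).1 (hA (comp_glue_mem_span_col X hn j (hA' b)))
    exact ⟨c, fun row => by simpa using (congrFun hc row).symm⟩
  choose c hc using hcoeff
  refine ⟨fun j a b => c j b a, fun i => funext fun b => ?_⟩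
  simp only [← glue_leftPart hn i, hc, vecMul, dotProduct, mul_comm]

theorem rank_unfold_le (X : (∀ k, Fin (I k)) → ℝ) (n : ℕ) :
    (unfold I X n).rank ≤ min (∏ k : {k : Fin N // (k : ℕ) < n}, I k.1)
      (∏ k : {k : Fin N // n ≤ (k : ℕ)}, I k.1) :=
  le_min ((rank_le_card_height _).trans_eq (by simp [Fintype.card_pi]))
    ((rank_le_card_width _).trans_eq (by simp [Fintype.card_pi]))

end TensorTrain

theorem tt_svd_exact_general
    (N : ℕ) (hN : 1 ≤ N) (I : Fin N → ℕ)
    (X : (∀ k : Fin N, Fin (I k)) → ℝ) :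
    ∃ (R : Fin (N + 1) → ℕ)
      (G : ∀ k : Fin N, Fin (R k.castSucc) → Fin (I k) → Fin (R k.succ) → ℝ),
      R 0 = 1 ∧ R (Fin.last N) = 1 ∧
      (∀ i, X i = ttEntry I R G i) ∧
      (∀ n : Fin (N + 1), 1 ≤ (n : ℕ) → (n : ℕ) ≤ N - 1 →
        R n = (unfold I X (n : ℕ)).rank ∧
        R n ≤ min (∏ k : {k : Fin N // (k : ℕ) < (n : ℕ)}, I k.1)
                  (∏ k : {k : Fin N // (n : ℕ) ≤ (k : ℕ)}, I k.1)) := by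
  choose R A hA₀ hArank hAN hAmem hAspan using TensorTrain.exists_frame (I := I) hN X
  choose g hg using fun n (hn : n < N) =>
    TensorTrain.exists_transfer X hn (A n) (A (n + 1)) (hAspan n) (hAmem (n + 1) n.succ_pos)
  refine ⟨fun j => R j, fun k a j b => g k k.isLt j a b, (hA₀ 0 rfl).1, (hAN N rfl).1,
    fun i => ?_, fun n h₁ h₂ => ?_⟩
  · have hchain := sum_prod_transfer_eq_dotProduct R N (fun k hk => g k hk (i ⟨k, hk⟩))
      (fun n b => A n b (TensorTrain.leftPart n i)) (fun k hk => hg k hk i) 1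
    have hfirst (r : ∀ j : Fin (N + 1), Fin (R j)) : A 0 (r 0) (TensorTrain.leftPart 0 i) = 1 :=
      (hA₀ 0 rfl).2 (r 0) _
    simp only [hfirst, (hAN N rfl).2, Pi.one_apply, one_mul, mul_one, dotProduct_one] at hchain
    rw [ttEntry, hchain, Finset.sum_const, Finset.card_univ, Fintype.card_fin, (hAN N rfl).1,
      one_smul]
  · have hrank := hArank n h₁ (by omega)
    exact ⟨hrank, hrank.trans_le (TensorTrain.rank_unfold_le X n)⟩

/-- **Exactness of TT-SVD.** Every order-`N` real tensor admits an exact tensor-train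
decomposition whose ranks are the matrix ranks of its sequential unfoldings; in
particular each rank is bounded by the corresponding minimum of products of dimensions. -/
theorem tt_svd_exact
    (N : ℕ) (hN : 1 ≤ N) (I : Fin N → ℕ) (hI : ∀ k, 0 < I k)
    (X : (∀ k : Fin N, Fin (I k)) → ℝ) :
    ∃ (R : Fin (N + 1) → ℕ)
      (G : ∀ k : Fin N, Fin (R k.castSucc) → Fin (I k) → Fin (R k.succ) → ℝ),
      R 0 = 1 ∧ R (Fin.last N) = 1 ∧
      (∀ i, X i = ttEntry I R G i) ∧
      (∀ n : Fin (N + 1), 1 ≤ (n : ℕ) → (n : ℕ) ≤ N - 1 →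
        R n = (unfold I X (n : ℕ)).rank ∧
        R n ≤ min (∏ k : {k : Fin N // (k : ℕ) < (n : ℕ)}, I k.1)
                  (∏ k : {k : Fin N // (n : ℕ) ≤ (k : ℕ)}, I k.1)) :=
  tt_svd_exact_general N hN I X

end
end

section
/- Let N ≥ 1 and let I : Fin N → ℕ be a family of positive dimensions, and suppose X : (∀ k : Fin N, Fin (I k)) → ℝ is in tensor-train (TT) format with ranks R : Fin (N+1) → ℕ (R 0 = 1, R N = 1) and cores G. Then for every n with 1 ≤ n ≤ N−1, the matrix rank of the n-th unfolding X⟨n⟩ of X is at most R n. -/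
noncomputable section

/-! Cut every rank-index tuple `r` at position `n` into its parts on `j ≤ n` and on `n ≤ j`,
which overlap only in `r n`. The TT product factors accordingly into a part that sees only the
row indices and a part that sees only the column indices, so summing out everything except `r n`
writes the `n`-th unfolding as a product of a matrix with `R n` columns and one with `R n` rows. -/

theorem Fintype.sum_pi_mul_eq_sum_mul_sum {ι : Type*} [Fintype ι] [LinearOrder ι]
    {β : ι → Type*} [∀ j, Fintype (β j)] [∀ j, DecidableEq (β j)] {M : Type*} [CommSemiring M]
    (n : ι) (a : (∀ j : {j // j ≤ n}, β j) → M) (b : (∀ j : {j // n ≤ j}, β j) → M) :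
    ∑ r : ∀ j, β j, a (fun j => r j) * b (fun j => r j) =
      ∑ m : β n, (∑ l with l ⟨n, le_rfl⟩ = m, a l) * ∑ l with l ⟨n, le_rfl⟩ = m, b l := by
  rw [← Finset.sum_fiberwise _ (fun r : ∀ j, β j => r n)]
  refine Finset.sum_congr rfl fun m _ => ?_
  rw [Finset.sum_mul_sum, ← Finset.sum_product']
  refine Finset.sum_nbij' (fun r => ((fun j => r j), (fun j => r j)))
    (fun lr j => if h : j ≤ n then lr.1 ⟨j, h⟩ else lr.2 ⟨j, le_of_not_ge h⟩) ?_ ?_ ?_ ?_ ?_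
  · intro r hr
    simpa using hr
  · rintro ⟨l, l'⟩ h
    simp only [Finset.mem_filter, Finset.mem_product, Finset.mem_univ, true_and] at h ⊢
    simpa using h.1
  · intro r _
    funext j
    split_ifs <;> rfl
  · rintro ⟨l, l'⟩ h
    simp only [Finset.mem_filter, Finset.mem_product, Finset.mem_univ, true_and] at h
    refine Prod.ext (funext fun j => dif_pos j.2) (funext fun ⟨j, hj⟩ => ?_)
    dsimp only
    split_ifs with hjn
    · obtain rfl := le_antisymm hjn hj
      exact h.1.trans h.2.symm
    · rfl
  · intro r _
    rfl

section
variable {N : ℕ} (I : Fin N → ℕ) (R : Fin (N + 1) → ℕ)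
  (G : ∀ k : Fin N, Fin (R k.castSucc) → Fin (I k) → Fin (R k.succ) → ℝ) (n : Fin (N + 1))

def ttLeft : Matrix (∀ k : {k : Fin N // (k : ℕ) < n}, Fin (I k.1)) (Fin (R n)) ℝ :=
  fun row m => ∑ l : ∀ j : {j // j ≤ n}, Fin (R j) with l ⟨n, le_rfl⟩ = m,
    ∏ k : {k : Fin N // (k : ℕ) < n},
      G k.1 (l ⟨k.1.castSucc, k.2.le⟩) (row k) (l ⟨k.1.succ, k.2⟩)

def ttRight : Matrix (Fin (R n)) (∀ k : {k : Fin N // n ≤ (k : ℕ)}, Fin (I k.1)) ℝ :=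
  fun m col => ∑ l : ∀ j : {j // n ≤ j}, Fin (R j) with l ⟨n, le_rfl⟩ = m,
    ∏ k : {k : Fin N // n ≤ (k : ℕ)},
      G k.1 (l ⟨k.1.castSucc, k.2⟩) (col k) (l ⟨k.1.succ, k.2.trans k.1.castSucc_le_succ⟩)

theorem unfold_ttEntry : unfold I (ttEntry I R G) n = ttLeft I R G n * ttRight I R G n := by
  ext row col
  simp only [Matrix.mul_apply, unfold, ttEntry, ttLeft, ttRight]
  rw [← Fintype.sum_pi_mul_eq_sum_mul_sum (β := fun j => Fin (R j)) n]
  refine Fintype.sum_congr _ _ fun r => ?_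
  rw [← Fintype.prod_subtype_mul_prod_subtype (fun k : Fin N => (k : ℕ) < n)]
  congr 1
  · exact Fintype.prod_congr _ _ fun k => by rw [dif_pos k.2]
  · exact Fintype.prod_equiv (Equiv.subtypeEquivRight fun k => not_lt) _ _ fun k => by
      rw [dif_neg k.2]; rfl

end

theorem unfolding_rank_le_tt_rank_general
    (N : ℕ) (I : Fin N → ℕ) (R : Fin (N + 1) → ℕ)
    (G : ∀ k : Fin N, Fin (R k.castSucc) → Fin (I k) → Fin (R k.succ) → ℝ)
    (X : (∀ k : Fin N, Fin (I k)) → ℝ)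
    (hX : ∀ i, X i = ttEntry I R G i) :
    ∀ n : Fin (N + 1), 1 ≤ (n : ℕ) → (n : ℕ) ≤ N - 1 →
      (unfold I X (n : ℕ)).rank ≤ R n := by
  intro n _ _
  obtain rfl : X = ttEntry I R G := funext hX
  calc (unfold I (ttEntry I R G) n).rank
      = (ttLeft I R G n * ttRight I R G n).rank := by rw [unfold_ttEntry]
    _ ≤ (ttLeft I R G n).rank := Matrix.rank_mul_le_left _ _
    _ ≤ R n := by simpa using (ttLeft I R G n).rank_le_card_width

/-- **Minimality of TT ranks.** If `X` is in tensor-train format with ranks `R`, then for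
every `1 ≤ n ≤ N − 1` the matrix rank of the `n`-th unfolding of `X` is at most `R n`. -/
theorem unfolding_rank_le_tt_rank
    (N : ℕ) (hN : 1 ≤ N) (I : Fin N → ℕ) (hI : ∀ k, 0 < I k)
    (R : Fin (N + 1) → ℕ) (hR0 : R 0 = 1) (hRN : R (Fin.last N) = 1)
    (G : ∀ k : Fin N, Fin (R k.castSucc) → Fin (I k) → Fin (R k.succ) → ℝ)
    (X : (∀ k : Fin N, Fin (I k)) → ℝ)
    (hX : ∀ i, X i = ttEntry I R G i) :
    ∀ n : Fin (N + 1), 1 ≤ (n : ℕ) → (n : ℕ) ≤ N - 1 →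
      (unfold I X (n : ℕ)).rank ≤ R n :=
  unfolding_rank_le_tt_rank_general N I R G X hX

end
end

section
/- Let m, r, n be natural numbers, let U : Matrix (Fin m) (Fin r) ℝ satisfy Uᵀ * U = 1 (U has orthonormal columns), and let M : Matrix (Fin m) (Fin n) ℝ and W : Matrix (Fin r) (Fin n) ℝ. Then ‖M − U * W‖_F² = ‖M − U * (Uᵀ * M)‖_F² + ‖Uᵀ * M − W‖_F², where ‖·‖_F denotes the Frobenius norm. In particular, ‖M − U * (Uᵀ * M)‖_F ≤ ‖M − U * W‖_F for every W. -/
open Matrix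

noncomputable section

/-- The Frobenius norm of a finitely indexed real matrix. -/
def frobM {ι κ : Type*} [Fintype ι] [Fintype κ] (A : Matrix ι κ ℝ) : ℝ :=
  Real.sqrt (∑ i, ∑ j, (A i j) ^ 2)

lemma frobM_sq {ι κ : Type*} [Fintype ι] [Fintype κ] (A : Matrix ι κ ℝ) :
    (frobM A) ^ 2 = Matrix.trace (Aᵀ * A) := by
  unfold frobM
  rw [Real.sq_sqrt (by positivity)]
  simp only [Matrix.trace, Matrix.diag, Matrix.mul_apply, Matrix.transpose_apply, sq]
  exact Finset.sum_comm

lemma frobM_nonneg {ι κ : Type*} [Fintype ι] [Fintype κ] (A : Matrix ι κ ℝ) :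
    0 ≤ frobM A := Real.sqrt_nonneg _

/-- **Pythagorean decomposition for projections onto the column space of a matrix with
orthonormal columns.** If `Uᵀ * U = 1` then for any `M` and `W`,
`‖M − U·W‖_F² = ‖M − U·(Uᵀ·M)‖_F² + ‖Uᵀ·M − W‖_F²`; in particular
`‖M − U·(Uᵀ·M)‖_F ≤ ‖M − U·W‖_F` for every `W`. -/
theorem frobenius_pythagoras_orthonormal_columns
    (m r n : ℕ)
    (U : Matrix (Fin m) (Fin r) ℝ) (hU : Uᵀ * U = 1)
    (M : Matrix (Fin m) (Fin n) ℝ) (W : Matrix (Fin r) (Fin n) ℝ) :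
    (frobM (M - U * W)) ^ 2 =
      (frobM (M - U * (Uᵀ * M))) ^ 2 + (frobM (Uᵀ * M - W)) ^ 2 ∧
    frobM (M - U * (Uᵀ * M)) ≤ frobM (M - U * W) := by
  set A := M - U * (Uᵀ * M) with hAdef
  set C := Uᵀ * M - W with hCdef
  have hUA : Uᵀ * A = 0 := by
    rw [hAdef, Matrix.mul_sub, ← Matrix.mul_assoc, hU, Matrix.one_mul, sub_self]
  have hAU : Aᵀ * U = 0 := by
    have := congrArg Matrix.transpose hUA
    rwa [Matrix.transpose_mul, Matrix.transpose_transpose, Matrix.transpose_zero] at this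
  have hdec : M - U * W = A + U * C := by
    rw [hAdef, hCdef, Matrix.mul_sub]
    abel
  have hexp : (M - U * W)ᵀ * (M - U * W) = Aᵀ * A + Cᵀ * C := by
    rw [hdec, Matrix.transpose_add, Matrix.transpose_mul, Matrix.add_mul, Matrix.mul_add,
      Matrix.mul_add]
    have h1 : Aᵀ * (U * C) = 0 := by rw [← Matrix.mul_assoc, hAU, Matrix.zero_mul]
    have h2 : Cᵀ * Uᵀ * A = 0 := by rw [Matrix.mul_assoc, hUA, Matrix.mul_zero]
    have h3 : Cᵀ * Uᵀ * (U * C) = Cᵀ * C := by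
      rw [Matrix.mul_assoc, ← Matrix.mul_assoc Uᵀ, hU, Matrix.one_mul]
    rw [h1, h2, h3, add_zero, zero_add]
  have hpyth : (frobM (M - U * W)) ^ 2 = (frobM A) ^ 2 + (frobM C) ^ 2 := by
    rw [frobM_sq, frobM_sq, frobM_sq, hexp, Matrix.trace_add]
  refine ⟨hpyth, ?_⟩
  have h1 : (frobM A) ^ 2 ≤ (frobM (M - U * W)) ^ 2 := by
    rw [hpyth]
    have := sq_nonneg (frobM C)
    linarith
  exact (pow_le_pow_iff_left₀ (frobM_nonneg A) (frobM_nonneg _) two_ne_zero).mp h1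
end
end
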